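/- arXiv:2406.11454 — 2 statements merged into one kernel-verified Lean document; each statement's English description precedes it below -/
import Mathlib

section
/- Let k > 0, ξ₀ > 0, σ₁ > 0, ℓ₁ > 0 and ω₁ ∈ ℝ. Then (1/(2π)) ∫_{−∞}^{∞} (σ₁²/2)[1/(1+(ω−ω₁)²/ℓ₁²) + 1/(1+(ω+ω₁)²/ℓ₁²)] / (k² + ξ₀² ω²) dω = ℓ₁ (k/ξ₀ + ℓ₁) σ₁² / ( 2kξ₀ ( (k/ξ₀ + ℓ₁)² + ω₁² ) ). -/
open MeasureTheory Real

open Filter Topology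


lemma integrable_kernel (a ℓ b : ℝ) (ha : 0 < a) (hl : 0 < ℓ) :
    Integrable fun ω : ℝ => 1 / ((a ^ 2 + ω ^ 2) * (ℓ ^ 2 + (ω - b) ^ 2)) := by
  have hla : Integrable fun ω : ℝ => 1 / ℓ ^ 2 * (1 / a ^ 2 * (1 + (ω / a) ^ 2)⁻¹) :=
    ((integrable_inv_one_add_sq.comp_div (ne_of_gt ha)).const_mul _).const_mul _
  refine hla.mono' ?_ (Eventually.of_forall fun ω => ?_)
  · apply Continuous.aestronglyMeasurable
    refine continuous_const.div (by continuity) fun ω => ?_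
    positivity
  · have h1 : (0:ℝ) < a ^ 2 + ω ^ 2 := by positivity
    have h2 : (0:ℝ) < ℓ ^ 2 + (ω - b) ^ 2 := by positivity
    rw [Real.norm_eq_abs, abs_of_pos (by positivity), div_le_iff₀ (by positivity)]
    have e1 : (1 + (ω / a) ^ 2)⁻¹ = a ^ 2 / (a ^ 2 + ω ^ 2) := by
      rw [inv_eq_one_div]; field_simp
    rw [e1]
    have e2 : 1 / ℓ ^ 2 * (1 / a ^ 2 * (a ^ 2 / (a ^ 2 + ω ^ 2))) *
        ((a ^ 2 + ω ^ 2) * (ℓ ^ 2 + (ω - b) ^ 2)) = (ℓ ^ 2 + (ω - b) ^ 2) / ℓ ^ 2 := by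
      field_simp
    rw [e2, le_div_iff₀ (by positivity), one_mul]
    nlinarith [sq_nonneg (ω - b)]


lemma logdiff_top (a ℓ b : ℝ) (ha : 0 < a) (hl : 0 < ℓ) :
    Tendsto (fun ω : ℝ => Real.log (a ^ 2 + ω ^ 2) - Real.log (ℓ ^ 2 + (ω - b) ^ 2))
      atTop (𝓝 0) := by
  have hsq : Tendsto (fun ω : ℝ => ω ^ 2) atTop atTop :=
    tendsto_pow_atTop (two_ne_zero)
  have h1 : Tendsto (fun ω : ℝ => a ^ 2 / ω ^ 2) atTop (𝓝 0) :=
    tendsto_const_nhds.div_atTop hsq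
  have h2 : Tendsto (fun ω : ℝ => ℓ ^ 2 / ω ^ 2) atTop (𝓝 0) :=
    tendsto_const_nhds.div_atTop hsq
  have h3 : Tendsto (fun ω : ℝ => b / ω) atTop (𝓝 0) :=
    tendsto_const_nhds.div_atTop tendsto_id
  have hr : Tendsto (fun ω : ℝ => (a ^ 2 / ω ^ 2 + 1) / (ℓ ^ 2 / ω ^ 2 + (1 - b / ω) ^ 2))
      atTop (𝓝 ((0 + 1) / (0 + (1 - 0) ^ 2))) := by
    exact (h1.add tendsto_const_nhds).div
      (h2.add (((tendsto_const_nhds.sub h3).pow 2))) (by norm_num)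
  have hr' : Tendsto (fun ω : ℝ => (a ^ 2 + ω ^ 2) / (ℓ ^ 2 + (ω - b) ^ 2)) atTop (𝓝 1) := by
    refine (hr.congr' ?_).mono_right (by norm_num)
    filter_upwards [eventually_gt_atTop (0:ℝ)] with ω hω
    have hω2 : (0:ℝ) < ℓ ^ 2 + (ω - b) ^ 2 := by positivity
    field_simp
  have hlog : Tendsto (fun ω : ℝ => Real.log ((a ^ 2 + ω ^ 2) / (ℓ ^ 2 + (ω - b) ^ 2)))
      atTop (𝓝 0) := by
    have := ((Real.continuousAt_log one_ne_zero).tendsto.comp hr')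
    simpa [Function.comp_def] using this
  refine hlog.congr fun ω => ?_
  rw [Real.log_div (by positivity) (by positivity)]

lemma logdiff_bot (a ℓ b : ℝ) (ha : 0 < a) (hl : 0 < ℓ) :
    Tendsto (fun ω : ℝ => Real.log (a ^ 2 + ω ^ 2) - Real.log (ℓ ^ 2 + (ω - b) ^ 2))
      atBot (𝓝 0) := by
  have := (logdiff_top a ℓ (-b) ha hl).comp tendsto_neg_atBot_atTop
  refine this.congr fun ω => ?_
  simp only [Function.comp]
  congr 2 <;> ring

lemma arctan_comp_top (ℓ b : ℝ) (hl : 0 < ℓ) :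
    Tendsto (fun ω : ℝ => Real.arctan ((ω - b) / ℓ)) atTop (𝓝 (π / 2)) := by
  refine (tendsto_arctan_atTop.mono_right nhdsWithin_le_nhds).comp ?_
  exact (tendsto_atTop_add_const_right atTop (-b) tendsto_id).atTop_div_const hl |>.congr
    fun ω => by simp [id]; ring
lemma arctan_comp_bot (ℓ b : ℝ) (hl : 0 < ℓ) :
    Tendsto (fun ω : ℝ => Real.arctan ((ω - b) / ℓ)) atBot (𝓝 (-(π / 2))) := by
  refine (tendsto_arctan_atBot.mono_right nhdsWithin_le_nhds).comp ?_
  exact (tendsto_atBot_add_const_right atBot (-b) tendsto_id).atBot_div_const hl |>.congr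
    fun ω => by simp [id]; ring

lemma kernel_integral_generic (a ℓ b : ℝ) (ha : 0 < a) (hl : 0 < ℓ)
    (hnd : (a - ℓ) ^ 2 + b ^ 2 ≠ 0) :
    ∫ ω : ℝ, 1 / ((a ^ 2 + ω ^ 2) * (ℓ ^ 2 + (ω - b) ^ 2))
      = π * (a + ℓ) / (a * ℓ * ((a + ℓ) ^ 2 + b ^ 2)) := by
  set Δ : ℝ := ((a + ℓ) ^ 2 + b ^ 2) * ((a - ℓ) ^ 2 + b ^ 2) with hΔdef
  have hΔ : Δ ≠ 0 := by
    have h1 : (0:ℝ) < (a + ℓ) ^ 2 + b ^ 2 := by positivity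
    have h2 : (0:ℝ) < (a - ℓ) ^ 2 + b ^ 2 := lt_of_le_of_ne (by positivity) (Ne.symm hnd)
    positivity
  set A : ℝ := 2 * b / Δ with hA
  set B : ℝ := (b ^ 2 + ℓ ^ 2 - a ^ 2) / Δ with hB
  set D : ℝ := (b ^ 2 - ℓ ^ 2 + a ^ 2) / Δ with hD
  set F : ℝ → ℝ := fun ω =>
    A / 2 * Real.log (a ^ 2 + ω ^ 2) - A / 2 * Real.log (ℓ ^ 2 + (ω - b) ^ 2)
      + B / a * Real.arctan (ω / a) + D / ℓ * Real.arctan ((ω - b) / ℓ) with hF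
  have hderiv : ∀ ω : ℝ, HasDerivAt F (1 / ((a ^ 2 + ω ^ 2) * (ℓ ^ 2 + (ω - b) ^ 2))) ω := by
    intro ω
    have h1 : (0:ℝ) < a ^ 2 + ω ^ 2 := by positivity
    have h2 : (0:ℝ) < ℓ ^ 2 + (ω - b) ^ 2 := by positivity
    have d1 : HasDerivAt (fun ω : ℝ => a ^ 2 + ω ^ 2) (2 * ω) ω := by
      simpa using (hasDerivAt_pow 2 ω).const_add (a ^ 2)
    have d2 : HasDerivAt (fun ω : ℝ => ℓ ^ 2 + (ω - b) ^ 2) (2 * (ω - b)) ω := by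
      simpa using (((hasDerivAt_id ω).sub_const b).pow 2).const_add (ℓ ^ 2)
    have dl1 : HasDerivAt (fun ω : ℝ => Real.log (a ^ 2 + ω ^ 2)) (2 * ω / (a ^ 2 + ω ^ 2)) ω :=
      d1.log h1.ne'
    have dl2 : HasDerivAt (fun ω : ℝ => Real.log (ℓ ^ 2 + (ω - b) ^ 2))
        (2 * (ω - b) / (ℓ ^ 2 + (ω - b) ^ 2)) ω := d2.log h2.ne'
    have da1 : HasDerivAt (fun ω : ℝ => Real.arctan (ω / a))
        (1 / (1 + (ω / a) ^ 2) * (1 / a)) ω := by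
      have := (Real.hasDerivAt_arctan (ω / a)).comp ω ((hasDerivAt_id ω).div_const a)
      exact this
    have da2 : HasDerivAt (fun ω : ℝ => Real.arctan ((ω - b) / ℓ))
        (1 / (1 + ((ω - b) / ℓ) ^ 2) * (1 / ℓ)) ω := by
      have := (Real.hasDerivAt_arctan ((ω - b) / ℓ)).comp ω
        (((hasDerivAt_id ω).sub_const b).div_const ℓ)
      exact this
    have hFd := (((dl1.const_mul (A / 2)).sub (dl2.const_mul (A / 2))).add
        (da1.const_mul (B / a))).add (da2.const_mul (D / ℓ))
    refine HasDerivAt.congr_deriv hFd ?_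
    rw [hA, hB, hD]
    have e1 : 1 + (ω / a) ^ 2 = (a ^ 2 + ω ^ 2) / a ^ 2 := by field_simp
    have e2 : 1 + ((ω - b) / ℓ) ^ 2 = (ℓ ^ 2 + (ω - b) ^ 2) / ℓ ^ 2 := by field_simp
    rw [e1, e2, hΔdef]
    field_simp
    ring
  have hint := integrable_kernel a ℓ b ha hl
  have htop : Tendsto F atTop (𝓝 (A / 2 * 0 + B / a * (π / 2) + D / ℓ * (π / 2))) := by
    have l1 := (logdiff_top a ℓ b ha hl).const_mul (A / 2)
    have l2 := (arctan_comp_top a 0 ha).const_mul (B / a)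
    have l3 := (arctan_comp_top ℓ b hl).const_mul (D / ℓ)
    have := (l1.add l2).add l3
    refine this.congr fun ω => ?_
    simp only [hF, sub_zero]
    ring
  have hbot : Tendsto F atBot (𝓝 (A / 2 * 0 + B / a * (-(π / 2)) + D / ℓ * (-(π / 2)))) := by
    have l1 := (logdiff_bot a ℓ b ha hl).const_mul (A / 2)
    have l2 := (arctan_comp_bot a 0 ha).const_mul (B / a)
    have l3 := (arctan_comp_bot ℓ b hl).const_mul (D / ℓ)
    have := (l1.add l2).add l3
    refine this.congr fun ω => ?_
    simp only [hF, sub_zero]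
    ring
  rw [MeasureTheory.integral_of_hasDerivAt_of_tendsto hderiv hint hbot htop]
  rw [hA, hB, hD, hΔdef]
  have h1 : (0:ℝ) < (a + ℓ) ^ 2 + b ^ 2 := by positivity
  have h2 : (0:ℝ) < (a - ℓ) ^ 2 + b ^ 2 := lt_of_le_of_ne (by positivity) (Ne.symm hnd)
  field_simp
  ring

lemma ratio_top (a : ℝ) (ha : 0 < a) :
    Tendsto (fun ω : ℝ => ω / (a ^ 2 + ω ^ 2)) atTop (𝓝 0) := by
  have h2 : Tendsto (fun ω : ℝ => a ^ 2 / ω ^ 2) atTop (𝓝 0) :=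
    tendsto_const_nhds.div_atTop (tendsto_pow_atTop two_ne_zero)
  have hr : Tendsto (fun ω : ℝ => ω⁻¹ / (a ^ 2 / ω ^ 2 + 1)) atTop (𝓝 (0 / (0 + 1))) :=
    tendsto_inv_atTop_zero.div (h2.add tendsto_const_nhds) (by norm_num)
  refine (hr.congr' ?_).mono_right (by norm_num)
  filter_upwards [eventually_gt_atTop (0:ℝ)] with ω hω
  have : (0:ℝ) < a ^ 2 + ω ^ 2 := by positivity
  field_simp

lemma ratio_bot (a : ℝ) (ha : 0 < a) :
    Tendsto (fun ω : ℝ => ω / (a ^ 2 + ω ^ 2)) atBot (𝓝 0) := by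
  have := ((ratio_top a ha).comp tendsto_neg_atBot_atTop).neg
  refine (this.congr fun ω => ?_).mono_right (by norm_num)
  simp only [Function.comp]
  rw [neg_sq]
  ring

lemma kernel_integral_deg (a : ℝ) (ha : 0 < a) :
    ∫ ω : ℝ, 1 / ((a ^ 2 + ω ^ 2) * (a ^ 2 + ω ^ 2)) = π / (2 * a ^ 3) := by
  set F : ℝ → ℝ := fun ω =>
    1 / (2 * a ^ 2) * (ω / (a ^ 2 + ω ^ 2)) + 1 / (2 * a ^ 3) * Real.arctan (ω / a) with hF
  have hderiv : ∀ ω : ℝ, HasDerivAt F (1 / ((a ^ 2 + ω ^ 2) * (a ^ 2 + ω ^ 2))) ω := by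
    intro ω
    have h1 : (0:ℝ) < a ^ 2 + ω ^ 2 := by positivity
    have d1 : HasDerivAt (fun ω : ℝ => a ^ 2 + ω ^ 2) (2 * ω) ω := by
      simpa using (hasDerivAt_pow 2 ω).const_add (a ^ 2)
    have dr : HasDerivAt (fun ω : ℝ => ω / (a ^ 2 + ω ^ 2))
        ((1 * (a ^ 2 + ω ^ 2) - ω * (2 * ω)) / (a ^ 2 + ω ^ 2) ^ 2) ω :=
      (hasDerivAt_id ω).div d1 h1.ne'
    have da : HasDerivAt (fun ω : ℝ => Real.arctan (ω / a))
        (1 / (1 + (ω / a) ^ 2) * (1 / a)) ω := by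
      have := (Real.hasDerivAt_arctan (ω / a)).comp ω ((hasDerivAt_id ω).div_const a)
      exact this
    have hFd := (dr.const_mul (1 / (2 * a ^ 2))).add (da.const_mul (1 / (2 * a ^ 3)))
    refine HasDerivAt.congr_deriv hFd ?_
    have e1 : 1 + (ω / a) ^ 2 = (a ^ 2 + ω ^ 2) / a ^ 2 := by field_simp
    rw [e1]
    field_simp
    ring
  have hint := integrable_kernel a a 0 ha ha
  simp only [sub_zero] at hint
  have htop : Tendsto F atTop (𝓝 (1 / (2 * a ^ 2) * 0 + 1 / (2 * a ^ 3) * (π / 2))) := by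
    have l2 := arctan_comp_top a 0 ha
    simp only [sub_zero] at l2
    exact ((ratio_top a ha).const_mul _).add (l2.const_mul _)
  have hbot : Tendsto F atBot (𝓝 (1 / (2 * a ^ 2) * 0 + 1 / (2 * a ^ 3) * (-(π / 2)))) := by
    have l2 := arctan_comp_bot a 0 ha
    simp only [sub_zero] at l2
    exact ((ratio_bot a ha).const_mul _).add (l2.const_mul _)
  rw [MeasureTheory.integral_of_hasDerivAt_of_tendsto hderiv hint hbot htop]
  field_simp
  ring


lemma kernel_integral (a ℓ b : ℝ) (ha : 0 < a) (hl : 0 < ℓ) :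
    ∫ ω : ℝ, 1 / ((a ^ 2 + ω ^ 2) * (ℓ ^ 2 + (ω - b) ^ 2))
      = π * (a + ℓ) / (a * ℓ * ((a + ℓ) ^ 2 + b ^ 2)) := by
  by_cases hnd : (a - ℓ) ^ 2 + b ^ 2 = 0
  · have hb : b = 0 := by nlinarith [sq_nonneg (a - ℓ), sq_nonneg b]
    have hal : a = ℓ := by nlinarith [sq_nonneg (a - ℓ), sq_nonneg b]
    subst hb; subst hal
    simp only [sub_zero]
    rw [kernel_integral_deg a ha]
    field_simp
    ring
  · exact kernel_integral_generic a ℓ b ha hl hnd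

/-- Stationary variance of the harmonic dynamics driven by Lorentzian-pair noise:
`(1/(2π)) ∫ ĉ(ω)/(k² + ξ₀²ω²) dω
  = ℓ₁ (k/ξ₀ + ℓ₁) σ₁² / (2kξ₀ ((k/ξ₀ + ℓ₁)² + ω₁²))`
where `ĉ(ω) = (σ₁²/2)[1/(1+(ω−ω₁)²/ℓ₁²) + 1/(1+(ω+ω₁)²/ℓ₁²)]`. -/
theorem psd1_stationary_variance (k ξ₀ σ₁ ℓ₁ ω₁ : ℝ)
    (hk : 0 < k) (hξ : 0 < ξ₀) (hσ : 0 < σ₁) (hℓ : 0 < ℓ₁) :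
    (1 / (2 * Real.pi)) *
        ∫ ω : ℝ, (σ₁ ^ 2 / 2 * (1 / (1 + (ω - ω₁) ^ 2 / ℓ₁ ^ 2)
              + 1 / (1 + (ω + ω₁) ^ 2 / ℓ₁ ^ 2)))
            / (k ^ 2 + ξ₀ ^ 2 * ω ^ 2)
      = ℓ₁ * (k / ξ₀ + ℓ₁) * σ₁ ^ 2
          / (2 * k * ξ₀ * ((k / ξ₀ + ℓ₁) ^ 2 + ω₁ ^ 2)) := by
  set a : ℝ := k / ξ₀ with hadef
  have ha : 0 < a := by positivity
  have key : ∀ ω : ℝ,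
      (σ₁ ^ 2 / 2 * (1 / (1 + (ω - ω₁) ^ 2 / ℓ₁ ^ 2) + 1 / (1 + (ω + ω₁) ^ 2 / ℓ₁ ^ 2)))
          / (k ^ 2 + ξ₀ ^ 2 * ω ^ 2)
        = σ₁ ^ 2 * ℓ₁ ^ 2 / (2 * ξ₀ ^ 2) *
            (1 / ((a ^ 2 + ω ^ 2) * (ℓ₁ ^ 2 + (ω - ω₁) ^ 2))
              + 1 / ((a ^ 2 + ω ^ 2) * (ℓ₁ ^ 2 + (ω - -ω₁) ^ 2))) := by
    intro ω
    have h0 : (0:ℝ) < 1 + (ω - ω₁) ^ 2 / ℓ₁ ^ 2 := by positivity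
    have h1 : (0:ℝ) < 1 + (ω + ω₁) ^ 2 / ℓ₁ ^ 2 := by positivity
    have h2 : (0:ℝ) < k ^ 2 + ξ₀ ^ 2 * ω ^ 2 := by positivity
    have h3 : (0:ℝ) < a ^ 2 + ω ^ 2 := by positivity
    have h4 : (0:ℝ) < ℓ₁ ^ 2 + (ω - ω₁) ^ 2 := by positivity
    have h5 : (0:ℝ) < ℓ₁ ^ 2 + (ω - -ω₁) ^ 2 := by positivity
    have hk2 : k ^ 2 + ξ₀ ^ 2 * ω ^ 2 = ξ₀ ^ 2 * (a ^ 2 + ω ^ 2) := by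
      rw [hadef]; field_simp
    rw [hk2]
    have hsub : ω - -ω₁ = ω + ω₁ := by ring
    rw [hsub]
    field_simp
  have hI : (∫ ω : ℝ, (σ₁ ^ 2 / 2 * (1 / (1 + (ω - ω₁) ^ 2 / ℓ₁ ^ 2)
              + 1 / (1 + (ω + ω₁) ^ 2 / ℓ₁ ^ 2))) / (k ^ 2 + ξ₀ ^ 2 * ω ^ 2))
      = σ₁ ^ 2 * ℓ₁ ^ 2 / (2 * ξ₀ ^ 2) *
          ((∫ ω : ℝ, 1 / ((a ^ 2 + ω ^ 2) * (ℓ₁ ^ 2 + (ω - ω₁) ^ 2)))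
            + ∫ ω : ℝ, 1 / ((a ^ 2 + ω ^ 2) * (ℓ₁ ^ 2 + (ω - -ω₁) ^ 2))) := by
    rw [← integral_add (integrable_kernel a ℓ₁ ω₁ ha hℓ) (integrable_kernel a ℓ₁ (-ω₁) ha hℓ),
      ← MeasureTheory.integral_const_mul]
    congr 1
    funext ω
    exact key ω
  rw [hI, kernel_integral a ℓ₁ ω₁ ha hℓ, kernel_integral a ℓ₁ (-ω₁) ha hℓ]
  have hπ : Real.pi ≠ 0 := Real.pi_ne_zero
  have hden1 : (0:ℝ) < (a + ℓ₁) ^ 2 + ω₁ ^ 2 := by positivity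
  have hden2 : (0:ℝ) < (a + ℓ₁) ^ 2 + (-ω₁) ^ 2 := by positivity
  have hka : k = a * ξ₀ := by rw [hadef]; field_simp
  rw [hka]
  rw [neg_sq] at hden2 ⊢
  field_simp
  ring
end

section
/- Let k > 0, ξ₀ > 0, σ > 0 and ℓ > 0. Then (1/(2π)) ∫_{−∞}^{∞} σ² ℓ⁴ / ( (ℓ² + ω²)² (k² + ξ₀² ω²) ) dω = (σ²/(4kξ₀)) · (2 + k ξ₀^{−1} ℓ^{−1}) / (1 + k ξ₀^{−1} ℓ^{−1})². -/
open MeasureTheory Real Filter Topology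

private lemma tendsto_arctan_div_atTop {c : ℝ} (hc : 0 < c) :
    Tendsto (fun x : ℝ => arctan (x / c)) atTop (𝓝 (π / 2)) :=
  (tendsto_arctan_atTop.mono_right nhdsWithin_le_nhds).comp
    (tendsto_id.atTop_div_const hc)

private lemma tendsto_arctan_div_atBot {c : ℝ} (hc : 0 < c) :
    Tendsto (fun x : ℝ => arctan (x / c)) atBot (𝓝 (-(π / 2))) :=
  (tendsto_arctan_atBot.mono_right nhdsWithin_le_nhds).comp
    (tendsto_id.atBot_div_const hc)

private lemma tendsto_div_sq_atTop {g : ℝ → ℝ} (hg : ∀ x : ℝ, 1 ≤ x → x ^ 2 ≤ g x)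
    (hgpos : ∀ x : ℝ, 0 < g x) :
    Tendsto (fun x : ℝ => x / g x) atTop (𝓝 0) := by
  apply squeeze_zero' (g := fun x : ℝ => x⁻¹)
  · filter_upwards [eventually_ge_atTop (1 : ℝ)] with x hx
    have h1 : (0:ℝ) < x := by linarith
    exact div_nonneg h1.le (hgpos x).le
  · filter_upwards [eventually_ge_atTop (1 : ℝ)] with x hx
    have h1 : (0:ℝ) < x := by linarith
    rw [div_le_iff₀ (hgpos x), inv_mul_eq_div, le_div_iff₀ h1]
    calc x * x = x ^ 2 := by ring
    _ ≤ g x := hg x hx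
  · exact tendsto_inv_atTop_zero

private lemma hasDerivAt_arctan_div {c : ℝ} (hc : 0 < c) (x : ℝ) :
    HasDerivAt (fun x : ℝ => arctan (x / c)) (c / (c ^ 2 + x ^ 2)) x := by
  have h := (Real.hasDerivAt_arctan (x / c)).comp x ((hasDerivAt_id x).div_const c)
  refine h.congr_deriv ?_
  have hc2 : (0:ℝ) < c ^ 2 + x ^ 2 := by positivity
  field_simp

private lemma hasDerivAt_xdiv {a : ℝ} (ha : 0 < a) (x : ℝ) :
    HasDerivAt (fun x : ℝ => x / (a ^ 2 + x ^ 2))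
      ((a ^ 2 - x ^ 2) / (a ^ 2 + x ^ 2) ^ 2) x := by
  have hne : a ^ 2 + x ^ 2 ≠ 0 := by positivity
  have h := (hasDerivAt_id x).div
    ((hasDerivAt_pow 2 x).const_add (a ^ 2)) hne
  refine h.congr_deriv ?_
  simp only [id]
  field_simp
  ring

private lemma hasDerivAt_xdiv2 {a : ℝ} (ha : 0 < a) (x : ℝ) :
    HasDerivAt (fun x : ℝ => x / (a ^ 2 + x ^ 2) ^ 2)
      ((a ^ 2 - 3 * x ^ 2) / (a ^ 2 + x ^ 2) ^ 3) x := by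
  have hne : (a ^ 2 + x ^ 2) ^ 2 ≠ 0 := by positivity
  have h := (hasDerivAt_id x).div
    (((hasDerivAt_pow 2 x).const_add (a ^ 2)).pow 2) hne
  refine h.congr_deriv ?_
  have h0 : a ^ 2 + x ^ 2 ≠ 0 := by positivity
  simp only [id, Pi.pow_apply]
  field_simp
  ring

private lemma integrable_base {a b : ℝ} (ha : 0 < a) (hb : 0 < b) :
    Integrable (fun x : ℝ => ((a ^ 2 + x ^ 2) ^ 2 * (b ^ 2 + x ^ 2))⁻¹) := by
  set m : ℝ := min a 1 with hm
  have hm0 : 0 < m := lt_min ha one_pos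
  have hma : m ≤ a := min_le_left _ _
  have hm1 : m ≤ 1 := min_le_right _ _
  have hC : 0 < a ^ 2 * b ^ 2 * m ^ 2 := by positivity
  apply (integrable_inv_one_add_sq.const_mul (a ^ 2 * b ^ 2 * m ^ 2)⁻¹).mono'
  · apply Continuous.aestronglyMeasurable
    apply Continuous.inv₀
    · fun_prop
    · intro x
      positivity
  · filter_upwards with x
    have hx1 : (0:ℝ) < 1 + x ^ 2 := by positivity
    have key : a ^ 2 * b ^ 2 * m ^ 2 * (1 + x ^ 2) ≤ (a ^ 2 + x ^ 2) ^ 2 * (b ^ 2 + x ^ 2) := by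
      have hm2a : m * m ≤ a * a := mul_le_mul hma hma hm0.le ha.le
      have hm21 : m * m ≤ 1 := by nlinarith
      have h1 : m ^ 2 * (1 + x ^ 2) ≤ a ^ 2 + x ^ 2 := by nlinarith [sq_nonneg x]
      have h2 : a ^ 2 ≤ a ^ 2 + x ^ 2 := by nlinarith
      have h3 : b ^ 2 ≤ b ^ 2 + x ^ 2 := by nlinarith
      calc a ^ 2 * b ^ 2 * m ^ 2 * (1 + x ^ 2)
          = (a ^ 2 * b ^ 2) * (m ^ 2 * (1 + x ^ 2)) := by ring
        _ ≤ ((a ^ 2 + x ^ 2) * (b ^ 2 + x ^ 2)) * (a ^ 2 + x ^ 2) :=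
            mul_le_mul (mul_le_mul h2 h3 (by positivity) (by positivity)) h1
              (by positivity) (by positivity)
        _ = (a ^ 2 + x ^ 2) ^ 2 * (b ^ 2 + x ^ 2) := by ring
    have hpos : (0:ℝ) < a ^ 2 * b ^ 2 * m ^ 2 * (1 + x ^ 2) := by positivity
    rw [Real.norm_eq_abs, abs_of_nonneg (by positivity), ← mul_inv]
    exact inv_anti₀ hpos key

private lemma tendsto_div_sq_atBot {g : ℝ → ℝ} (hg : ∀ x : ℝ, 1 ≤ x → x ^ 2 ≤ g x)
    (hgpos : ∀ x : ℝ, 0 < g x) (hgeven : ∀ x : ℝ, g (-x) = g x) :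
    Tendsto (fun x : ℝ => x / g x) atBot (𝓝 0) := by
  have h := ((tendsto_div_sq_atTop hg hgpos).comp tendsto_neg_atBot_atTop).neg
  rw [neg_zero] at h
  have heq : (fun x : ℝ => x / g x) = fun x : ℝ => -((-x) / g (-x)) := by
    funext x
    rw [hgeven, neg_div, neg_neg]
  rw [heq]
  exact h

set_option maxHeartbeats 1000000 in
private lemma key_integral {a b : ℝ} (ha : 0 < a) (hb : 0 < b) :
    ∫ x : ℝ, ((a ^ 2 + x ^ 2) ^ 2 * (b ^ 2 + x ^ 2))⁻¹
      = π * (2 * a + b) / (2 * a ^ 3 * b * (a + b) ^ 2) := by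
  have ha2 : a ^ 2 ≠ 0 := by positivity
  have hint := integrable_base ha hb
  rcases eq_or_ne a b with rfl | hne
  · -- b = a case
    set F : ℝ → ℝ := fun x =>
      3 / (8 * a ^ 5) * arctan (x / a) + 3 / (8 * a ^ 4) * (x / (a ^ 2 + x ^ 2))
        + 1 / (4 * a ^ 2) * (x / (a ^ 2 + x ^ 2) ^ 2) with hF
    have hderiv : ∀ x : ℝ, HasDerivAt F (((a ^ 2 + x ^ 2) ^ 2 * (a ^ 2 + x ^ 2))⁻¹) x := by
      intro x
      have h := (((hasDerivAt_arctan_div ha x).const_mul (3 / (8 * a ^ 5))).add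
        ((hasDerivAt_xdiv ha x).const_mul (3 / (8 * a ^ 4)))).add
        ((hasDerivAt_xdiv2 ha x).const_mul (1 / (4 * a ^ 2)))
      refine h.congr_deriv ?_
      have h0 : a ^ 2 + x ^ 2 ≠ 0 := by positivity
      field_simp
      ring
    have htop : Tendsto F atTop (𝓝 (3 / (8 * a ^ 5) * (π / 2) + 3 / (8 * a ^ 4) * 0
        + 1 / (4 * a ^ 2) * 0)) := by
      refine (((tendsto_arctan_div_atTop ha).const_mul _).add
        ((tendsto_div_sq_atTop (g := fun x => a ^ 2 + x ^ 2) ?_ ?_).const_mul _)).add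
        ((tendsto_div_sq_atTop (g := fun x => (a ^ 2 + x ^ 2) ^ 2) ?_ ?_).const_mul _)
      · intro x hx
        show x ^ 2 ≤ a ^ 2 + x ^ 2
        nlinarith [sq_nonneg a]
      · intro x; positivity
      · intro x hx
        have hx2 : (1:ℝ) ≤ x ^ 2 := by nlinarith
        show x ^ 2 ≤ (a ^ 2 + x ^ 2) ^ 2
        nlinarith [sq_nonneg a, sq_nonneg (a * x),
          mul_le_mul_of_nonneg_left hx2 (by positivity : (0:ℝ) ≤ x ^ 2)]
      · intro x; positivity
    have hbot : Tendsto F atBot (𝓝 (3 / (8 * a ^ 5) * (-(π / 2)) + 3 / (8 * a ^ 4) * 0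
        + 1 / (4 * a ^ 2) * 0)) := by
      refine (((tendsto_arctan_div_atBot ha).const_mul _).add
        ((tendsto_div_sq_atBot (g := fun x => a ^ 2 + x ^ 2) ?_ ?_ ?_).const_mul _)).add
        ((tendsto_div_sq_atBot (g := fun x => (a ^ 2 + x ^ 2) ^ 2) ?_ ?_ ?_).const_mul _)
      · intro x hx
        show x ^ 2 ≤ a ^ 2 + x ^ 2
        nlinarith [sq_nonneg a]
      · intro x; positivity
      · intro x; simp [neg_sq]
      · intro x hx
        have hx2 : (1:ℝ) ≤ x ^ 2 := by nlinarith
        show x ^ 2 ≤ (a ^ 2 + x ^ 2) ^ 2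
        nlinarith [sq_nonneg a, sq_nonneg (a * x),
          mul_le_mul_of_nonneg_left hx2 (by positivity : (0:ℝ) ≤ x ^ 2)]
      · intro x; positivity
      · intro x; simp [neg_sq]
    rw [integral_of_hasDerivAt_of_tendsto hderiv hint hbot htop]
    field_simp
    ring
  · -- a ≠ b case
    have hab2 : a ^ 2 - b ^ 2 ≠ 0 := by
      intro h
      have : (a - b) * (a + b) = 0 := by linarith [h]
      rcases mul_eq_zero.mp this with h' | h'
      · exact hne (by linarith)
      · linarith
    have hba2 : b ^ 2 - a ^ 2 ≠ 0 := fun h => hab2 (by linarith)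
    set c₁ : ℝ := (-1 / (a ^ 2 - b ^ 2) ^ 2 + 1 / (2 * a ^ 2 * (b ^ 2 - a ^ 2))) / a with hc₁
    set c₂ : ℝ := 1 / (2 * a ^ 2 * (b ^ 2 - a ^ 2)) with hc₂
    set c₃ : ℝ := 1 / (b * (a ^ 2 - b ^ 2) ^ 2) with hc₃
    set F : ℝ → ℝ := fun x =>
      c₁ * arctan (x / a) + c₂ * (x / (a ^ 2 + x ^ 2)) + c₃ * arctan (x / b) with hF
    have hderiv : ∀ x : ℝ, HasDerivAt F (((a ^ 2 + x ^ 2) ^ 2 * (b ^ 2 + x ^ 2))⁻¹) x := by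
      intro x
      have h := (((hasDerivAt_arctan_div ha x).const_mul c₁).add
        ((hasDerivAt_xdiv ha x).const_mul c₂)).add
        ((hasDerivAt_arctan_div hb x).const_mul c₃)
      refine h.congr_deriv ?_
      have h0 : a ^ 2 + x ^ 2 ≠ 0 := by positivity
      have h1 : b ^ 2 + x ^ 2 ≠ 0 := by positivity
      rw [hc₁, hc₂, hc₃]
      field_simp
      ring
    have htop : Tendsto F atTop (𝓝 (c₁ * (π / 2) + c₂ * 0 + c₃ * (π / 2))) := by
      refine (((tendsto_arctan_div_atTop ha).const_mul _).add
        ((tendsto_div_sq_atTop (g := fun x => a ^ 2 + x ^ 2) ?_ ?_).const_mul _)).add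
        ((tendsto_arctan_div_atTop hb).const_mul _)
      · intro x hx
        show x ^ 2 ≤ a ^ 2 + x ^ 2
        nlinarith [sq_nonneg a]
      · intro x; positivity
    have hbot : Tendsto F atBot (𝓝 (c₁ * (-(π / 2)) + c₂ * 0 + c₃ * (-(π / 2)))) := by
      refine (((tendsto_arctan_div_atBot ha).const_mul _).add
        ((tendsto_div_sq_atBot (g := fun x => a ^ 2 + x ^ 2) ?_ ?_ ?_).const_mul _)).add
        ((tendsto_arctan_div_atBot hb).const_mul _)
      · intro x hx
        show x ^ 2 ≤ a ^ 2 + x ^ 2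
        nlinarith [sq_nonneg a]
      · intro x; positivity
      · intro x; simp [neg_sq]
    rw [integral_of_hasDerivAt_of_tendsto hderiv hint hbot htop, hc₁, hc₂, hc₃]
    have hab : a + b ≠ 0 := by positivity
    field_simp
    ring

/-- Stationary variance of the harmonic dynamics driven by Matérn (ν = 3/2) noise:
`(1/(2π)) ∫ σ²ℓ⁴ / ((ℓ² + ω²)² (k² + ξ₀²ω²)) dω
  = (σ²/(4kξ₀)) (2 + kξ₀⁻¹ℓ⁻¹)/(1 + kξ₀⁻¹ℓ⁻¹)²`. -/
theorem psd2_stationary_variance (k ξ₀ σ ℓ : ℝ)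
    (hk : 0 < k) (hξ : 0 < ξ₀) (hσ : 0 < σ) (hℓ : 0 < ℓ) :
    (1 / (2 * Real.pi)) *
        ∫ ω : ℝ, σ ^ 2 * ℓ ^ 4 / ((ℓ ^ 2 + ω ^ 2) ^ 2 * (k ^ 2 + ξ₀ ^ 2 * ω ^ 2))
      = σ ^ 2 / (4 * k * ξ₀) * (2 + k * ξ₀⁻¹ * ℓ⁻¹) / (1 + k * ξ₀⁻¹ * ℓ⁻¹) ^ 2 := by
  have hb : 0 < k / ξ₀ := div_pos hk hξ
  have hpt : ∀ ω : ℝ, σ ^ 2 * ℓ ^ 4 / ((ℓ ^ 2 + ω ^ 2) ^ 2 * (k ^ 2 + ξ₀ ^ 2 * ω ^ 2))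
      = (σ ^ 2 * ℓ ^ 4 / ξ₀ ^ 2) * ((ℓ ^ 2 + ω ^ 2) ^ 2 * ((k / ξ₀) ^ 2 + ω ^ 2))⁻¹ := by
    intro ω
    have h1 : (ℓ ^ 2 + ω ^ 2) ^ 2 ≠ 0 := by positivity
    have h2 : k ^ 2 + ξ₀ ^ 2 * ω ^ 2 ≠ 0 := by positivity
    have h3 : (k / ξ₀) ^ 2 + ω ^ 2 ≠ 0 := by positivity
    field_simp
  simp only [hpt]
  rw [MeasureTheory.integral_const_mul, key_integral hℓ hb]
  have hr : (0:ℝ) < ℓ + k / ξ₀ := by positivity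
  have hπ : Real.pi ≠ 0 := Real.pi_ne_zero
  field_simp
  ring
end
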